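/- arXiv:0903.1627 — 6 statements merged into one kernel-verified Lean document; each statement's English description precedes it below -/
import Mathlib

section
/- If the language of an infinite word admits only finitely many special factors, then the infinite word is eventually periodic. -/
/-- `x` is a factor (contiguous substring) of some word in the language `L`. -/
def IsFactor {A : Type*} (x : List A) (L : Set (List A)) : Prop :=
  ∃ w ∈ L, x <:+: w

/-- The complexity function of a language: number of `n`-length factors. -/
noncomputable def complexity {A : Type*} (L : Set (List A)) (n : ℕ) : ℕ :=
  Nat.card {x : List A // x.length = n ∧ IsFactor x L}

/-- `w` is a special factor of `L`. -/
def IsSpecial {A : Type*} (w : List A) (L : Set (List A)) : Prop :=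
  ∃ a b : A, a ≠ b ∧ IsFactor (w ++ [a]) L ∧ IsFactor (w ++ [b]) L

/-- A language is (right-)extendable. -/
def Extendable {A : Type*} (L : Set (List A)) : Prop :=
  ∀ w ∈ L, ∃ a : A, w ++ [a] ∈ L

theorem stmt_8 {A : Type*} [Fintype A] (u : ℕ → A)
    (h : {w : List A | IsSpecial w
        {x : List A | ∃ i : ℕ, x = (List.range x.length).map fun t => u (i + t)}}.Finite) :
    ∃ N q : ℕ, 1 ≤ q ∧ ∀ i ≥ N, u (i + q) = u i := by
  set L : Set (List A) :=
    {x : List A | ∃ i : ℕ, x = (List.range x.length).map fun t => u (i + t)} with hLdef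
  set W : ℕ → ℕ → List A := fun i n => (List.range n).map fun t => u (i + t) with hWdef
  have hWlen : ∀ i n, (W i n).length = n := by intro i n; simp [hWdef]
  have hWmem : ∀ i n, W i n ∈ L := by
    intro i n
    refine ⟨i, ?_⟩
    rw [hWlen]
  have hWsnoc : ∀ i n, W i (n + 1) = W i n ++ [u (i + n)] := by
    intro i n; simp [hWdef, List.range_succ]
  have hWcons : ∀ i n, W i (n + 1) = u i :: W (i + 1) n := by
    intro i n
    apply List.ext_getElem
    · simp [hWdef]
    · intro t h1 h2
      cases t with
      | zero => simp [hWdef]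
      | succ t =>
        simp only [hWdef, List.getElem_map, List.getElem_range, List.getElem_cons_succ]
        congr 1
        omega
  obtain ⟨n₀, hn₀⟩ := (h.image List.length).bddAbove
  -- key: factors of length n₀+1 have a unique right extension
  have key : ∀ p q : ℕ, W p (n₀ + 1) = W q (n₀ + 1) →
      u (p + (n₀ + 1)) = u (q + (n₀ + 1)) := by
    intro p q hpq
    by_contra hne
    have hsp : W p (n₀ + 1) ∈ {w : List A | IsSpecial w L} := by
      refine ⟨u (p + (n₀ + 1)), u (q + (n₀ + 1)), hne, ?_, ?_⟩
      · refine ⟨W p (n₀ + 1) ++ [u (p + (n₀ + 1))], ?_, List.infix_refl _⟩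
        rw [← hWsnoc p (n₀ + 1)]
        exact hWmem _ _
      · refine ⟨W p (n₀ + 1) ++ [u (q + (n₀ + 1))], ?_, List.infix_refl _⟩
        rw [hpq, ← hWsnoc q (n₀ + 1)]
        exact hWmem _ _
    have : (W p (n₀ + 1)).length ≤ n₀ := hn₀ (Set.mem_image_of_mem List.length hsp)
    rw [hWlen] at this
    omega
  -- pigeonhole
  obtain ⟨i, j, hij, hfeq⟩ := Finite.exists_ne_map_eq_of_infinite
    (fun i : ℕ => (fun t : Fin (n₀ + 1) => u (i + t)))
  have hWeq : W i (n₀ + 1) = W j (n₀ + 1) := by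
    apply List.ext_getElem (by rw [hWlen, hWlen])
    intro t h1 h2
    rw [hWlen] at h1
    simp only [hWdef, List.getElem_map, List.getElem_range]
    exact congrFun hfeq ⟨t, h1⟩
  have main : ∀ a b : ℕ, a < b → W a (n₀ + 1) = W b (n₀ + 1) →
      ∃ N q : ℕ, 1 ≤ q ∧ ∀ i ≥ N, u (i + q) = u i := by
    intro a b hab hWab
    have step : ∀ k, W (a + k) (n₀ + 1) = W (b + k) (n₀ + 1) := by
      intro k
      induction k with
      | zero => simpa using hWab
      | succ k ih =>
        have h1 : u (a + k + (n₀ + 1)) = u (b + k + (n₀ + 1)) := key _ _ ih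
        have h2 : W (a + k) (n₀ + 1) ++ [u (a + k + (n₀ + 1))]
            = W (b + k) (n₀ + 1) ++ [u (b + k + (n₀ + 1))] := by rw [ih, h1]
        rw [← hWsnoc (a + k) (n₀ + 1), ← hWsnoc (b + k) (n₀ + 1),
          hWcons (a + k) (n₀ + 1), hWcons (b + k) (n₀ + 1)] at h2
        injection h2
    refine ⟨a, b - a, by omega, ?_⟩
    intro m hm
    obtain ⟨k, rfl⟩ : ∃ k, m = a + k := ⟨m - a, by omega⟩
    have hk := step k
    rw [hWcons (a + k) n₀, hWcons (b + k) n₀] at hk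
    injection hk with h1 _
    rw [show a + k + (b - a) = b + k by omega]
    exact h1.symm
  rcases hij.lt_or_gt with hlt | hlt
  · exact main i j hlt hWeq
  · exact main j i hlt hWeq.symm
end

section
/- If a language L over a finite alphabet admits only finitely many special factors, then there exists a finite set T of pairs of words such that every word of L has the form x y^n for some (x, y) ∈ T and n ∈ ℕ. -/
/-
If every special factor of `L` is shorter than `N`, then along any word of `L` the letter
following a window of length `N` is determined by that window. By pigeonhole two of the first
`|A|^N + 1` windows of a long word coincide, so from the first of them on the word is periodic
with period at most `|A|^N`; hence it is `x y^n` with `x` and `y` of bounded length.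
-/

open List Fintype

section Words

variable {A : Type*}

theorem List.flatten_replicate_append_append_comm (r t : List A) (m : ℕ) :
    (replicate m (r ++ t)).flatten ++ r = r ++ (replicate m (t ++ r)).flatten := by
  induction m with
  | zero => simp
  | succ m ih => simp [replicate_succ, ih]

theorem List.exists_eq_flatten_replicate_append_of_prefix_append {y : List A} (hy : y ≠ []) :
    ∀ {s : List A}, s <+: y ++ s → ∃ m r, r <+: y ∧ s = (replicate m y).flatten ++ r
  | s, hs => by
    by_cases hlen : s.length ≤ y.length
    · exact ⟨0, s, prefix_of_prefix_length_le hs (prefix_append y s) hlen, by simp⟩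
    · obtain ⟨s', rfl⟩ := prefix_of_prefix_length_le (prefix_append y s) hs (by omega)
      have hs' : s' <+: y ++ s' := (prefix_append_right_inj y).1 (by simpa using hs)
      have : s'.length < (y ++ s').length := by simp [length_pos_iff.2 hy]
      obtain ⟨m, r, hr, rfl⟩ := exists_eq_flatten_replicate_append_of_prefix_append hy hs'
      exact ⟨m + 1, r, hr, by simp [replicate_succ]⟩
termination_by s => s.length

theorem List.exists_lt_take_drop_eq_take_drop [Fintype A] (N : ℕ) {w : List A}
    (hw : N + card A ^ N ≤ w.length) :
    ∃ i j, i < j ∧ j ≤ card A ^ N ∧ (w.drop i).take N = (w.drop j).take N := by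
  let window (i : Fin (card A ^ N + 1)) : Vector A N := ⟨(w.drop i).take N, by simp; omega⟩
  obtain ⟨i, j, hne, heq⟩ := Fintype.exists_ne_map_eq_of_card_lt window (by simp)
  have heq' := congrArg Subtype.val heq
  rcases lt_or_gt_of_ne (Fin.val_ne_of_ne hne) with h | h
  · exact ⟨i, j, h, j.is_le, heq'⟩
  · exact ⟨j, i, h, i.is_le, heq'.symm⟩

end Words

section Factors

variable {A : Type*} {L : Set (List A)}

theorem IsFactor.of_infix {x y : List A} (hx : IsFactor x L) (hyx : y <:+: x) : IsFactor y L :=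
  let ⟨w, hw, hxw⟩ := hx
  ⟨w, hw, hyx.trans hxw⟩

theorem isPrefix_of_isFactor_append {N : ℕ} (hN : ∀ v, IsSpecial v L → v.length < N) :
    ∀ {u t t' : List A}, N ≤ u.length → IsFactor (u ++ t) L → IsFactor (u ++ t') L →
      t'.length ≤ t.length → t' <+: t
  | _, _, [], _, _, _, _ => nil_prefix
  | _, [], _ :: _, _, _, _, hlen => by simp at hlen
  | u, c :: t, c' :: t', hu, ht, ht', hlen => by
    have hsnoc (a : A) (s : List A) : u ++ [a] <:+: u ++ a :: s :=
      ((prefix_append_right_inj u).2 (by simp)).isInfix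
    have hc : c' = c := by
      by_contra hne
      exact absurd (hN u ⟨c', c, hne, ht'.of_infix (hsnoc _ _), ht.of_infix (hsnoc _ _)⟩) (by omega)
    subst hc
    refine cons_prefix_cons.2 ⟨rfl, isPrefix_of_isFactor_append hN (u := u ++ [c']) ?_ ?_ ?_ ?_⟩
    · simp; omega
    · simpa using ht
    · simpa using ht'
    · simpa using hlen

theorem exists_eq_append_flatten_replicate_of_mem [Fintype A] {N : ℕ}
    (hN : ∀ v, IsSpecial v L → v.length < N) {w : List A} (hw : w ∈ L) :
    ∃ x y n, x.length ≤ N + 2 * card A ^ N ∧ y.length ≤ card A ^ N ∧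
      w = x ++ (replicate n y).flatten := by
  by_cases hshort : w.length < N + card A ^ N
  · exact ⟨w, [], 0, by omega, by simp, by simp⟩
  obtain ⟨i, j, hij, hjK, hwin⟩ := exists_lt_take_drop_eq_take_drop N (w := w) (by omega)
  set y := (w.drop i).take (j - i)
  set s := w.drop j
  have hys : w.drop i = y ++ s := by
    rw [← take_append_drop (j - i) (w.drop i), drop_drop, Nat.add_sub_cancel' hij.le]
  have hfac {v : List A} (hv : v <:+ w) : IsFactor v L := ⟨w, hw, hv.isInfix⟩
  -- the letter after a window of length `N` is determined by the window
  have hs : s <+: w.drop i := by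
    have key := isPrefix_of_isFactor_append hN (u := s.take N) (t := (w.drop i).drop N)
      (t' := s.drop N) (by simp [s]; omega)
      (by rw [← hwin, take_append_drop]; exact hfac (drop_suffix _ _))
      (by rw [take_append_drop]; exact hfac (drop_suffix _ _)) (by simp [s]; omega)
    have := (prefix_append_right_inj (s.take N)).2 key
    rwa [take_append_drop, ← hwin, take_append_drop] at this
  have hy0 : y ≠ [] := by simp [y]; omega
  obtain ⟨m, r, ⟨t, hrt⟩, hsm⟩ :=
    exists_eq_flatten_replicate_append_of_prefix_append hy0 (hys ▸ hs)
  have hylen : y.length = j - i := by simp [y]; omega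
  refine ⟨w.take i ++ r, t ++ r, m + 1, ?_, ?_, ?_⟩
  · have := congrArg length hrt
    simp at this ⊢; omega
  · have := congrArg length hrt
    simp at this ⊢; omega
  · calc w = w.take i ++ (y ++ s) := by rw [← hys, take_append_drop]
      _ = w.take i ++ ((replicate (m + 1) (r ++ t)).flatten ++ r) := by
        rw [hsm, hrt, replicate_succ]; simp
      _ = _ := by rw [flatten_replicate_append_append_comm, append_assoc]

end Factors

theorem stmt_9 {A : Type*} [Fintype A] (L : Set (List A))
    (h : {w : List A | IsSpecial w L}.Finite) :
    ∃ T : Finset (List A × List A), ∀ w ∈ L, ∃ p ∈ T, ∃ n : ℕ, w = p.1 ++ (List.replicate n p.2).flatten := by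
  obtain ⟨M, hM⟩ := (h.image length).bddAbove
  have hN : ∀ v, IsSpecial v L → v.length < M + 1 := fun v hv =>
    Nat.lt_succ_of_le (hM ⟨v, hv, rfl⟩)
  set B := M + 1 + 2 * card A ^ (M + 1)
  refine ⟨((finite_length_le A B).prod (finite_length_le A B)).toFinset, fun w hw => ?_⟩
  obtain ⟨x, y, n, hx, hy, rfl⟩ := exists_eq_append_flatten_replicate_of_mem hN hw
  exact ⟨(x, y), by simp; omega, n, rfl⟩
end

section
/- The complexity function of any extendable language is either strictly increasing, or is 'first increasing then constant': there exists m with p(0) < p(1) < ⋯ < p(m) and p(m+n) = p(m) for all n ∈ ℕ. -/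
section Aux

variable {A : Type*} [Fintype A] (L : Set (List A))

lemma isFactor_of_infix {x y : List A} (h : x <:+: y) (hy : IsFactor y L) :
    IsFactor x L := by
  obtain ⟨w, hw, hyw⟩ := hy
  exact ⟨w, hw, h.trans hyw⟩

lemma exists_extend (hL : Extendable L) {x : List A} (hx : IsFactor x L) :
    ∃ a : A, IsFactor (x ++ [a]) L := by
  obtain ⟨w, hw, s, t, hst⟩ := hx
  cases t with
  | nil =>
    obtain ⟨a, ha⟩ := hL w hw
    refine ⟨a, w ++ [a], ha, s, [], ?_⟩
    simp only [List.append_nil] at hst ⊢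
    rw [← hst, List.append_assoc]
  | cons c t' =>
    refine ⟨c, w, hw, s, t', ?_⟩
    rw [← hst]
    simp

/-- The set of `n`-factors is finite. -/
instance instFinF (n : ℕ) : Finite {x : List A // x.length = n ∧ IsFactor x L} := by
  have : Finite {l : List A | l.length = n} := List.finite_length_eq A n
  exact Finite.Set.subset {l : List A | l.length = n} (fun x hx => hx.1)

/-- The extension map `F n → F (n+1)`. -/
noncomputable def extMap (hL : Extendable L) (n : ℕ) :
    {x : List A // x.length = n ∧ IsFactor x L} →
      {x : List A // x.length = n + 1 ∧ IsFactor x L} :=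
  fun x => ⟨x.1 ++ [(exists_extend L hL x.2.2).choose],
    by simp [x.2.1], (exists_extend L hL x.2.2).choose_spec⟩

lemma extMap_injective (hL : Extendable L) (n : ℕ) :
    Function.Injective (extMap L hL n) := by
  rintro ⟨x, hx⟩ ⟨y, hy⟩ h
  simp only [extMap, Subtype.mk.injEq] at h
  have := List.append_inj h (by rw [hx.1, hy.1])
  exact Subtype.ext this.1

lemma complexity_mono (hL : Extendable L) : Monotone (complexity L) := by
  apply monotone_nat_of_le_succ
  intro n
  exact Nat.card_le_card_of_injective _ (extMap_injective L hL n)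

/-- If no length-`n` special factor, then `p (n+1) ≤ p n`. -/
lemma complexity_le_of_no_special (hL : Extendable L) (n : ℕ)
    (h : ∀ w : List A, w.length = n → ¬ IsSpecial w L) :
    complexity L (n + 1) ≤ complexity L n := by
  have key : Function.Injective
      (fun x : {x : List A // x.length = n + 1 ∧ IsFactor x L} =>
        (⟨x.1.dropLast, by simp [x.2.1],
          isFactor_of_infix L x.1.dropLast_prefix.isInfix x.2.2⟩ :
          {x : List A // x.length = n ∧ IsFactor x L})) := by
    rintro ⟨x, hx⟩ ⟨y, hy⟩ hxy
    simp only [Subtype.mk.injEq] at hxy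
    have hxne : x ≠ [] := by rintro rfl; simp at hx
    have hyne : y ≠ [] := by rintro rfl; simp at hy
    have hx' : x = x.dropLast ++ [x.getLast hxne] := (List.dropLast_append_getLast hxne).symm
    have hy' : y = y.dropLast ++ [y.getLast hyne] := (List.dropLast_append_getLast hyne).symm
    by_cases hab : x.getLast hxne = y.getLast hyne
    · have hmid : x.dropLast ++ [x.getLast hxne] = y.dropLast ++ [y.getLast hyne] := by
        rw [hxy, hab]
      exact Subtype.ext (hx'.trans (hmid.trans hy'.symm))
    · exfalso
      apply h x.dropLast (by simp [hx.1])
      exact ⟨x.getLast hxne, y.getLast hyne, hab,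
        by rw [← hx']; exact hx.2, by rw [hxy, ← hy']; exact hy.2⟩
  exact Nat.card_le_card_of_injective _ key

/-- If the complexity stalls at `n`, there is no length-`n` special factor. -/
lemma no_special_of_stall (hL : Extendable L) (n : ℕ)
    (h : complexity L (n + 1) = complexity L n) :
    ∀ w : List A, w.length = n → ¬ IsSpecial w L := by
  intro w hw ⟨a, b, hab, hfa, hfb⟩
  have hsurj : Function.Surjective (extMap L hL n) :=
    ((Nat.bijective_iff_injective_and_card _).mpr
      ⟨extMap_injective L hL n, h.symm⟩).surjective
  have hwf : IsFactor w L :=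
    isFactor_of_infix L (List.prefix_append w [a]).isInfix hfa
  obtain ⟨⟨x, hx⟩, hxa⟩ := hsurj ⟨w ++ [a], by simp [hw], hfa⟩
  obtain ⟨⟨y, hy⟩, hyb⟩ := hsurj ⟨w ++ [b], by simp [hw], hfb⟩
  simp only [extMap, Subtype.mk.injEq] at hxa hyb
  have hxw := List.append_inj hxa (by rw [hx.1, hw])
  have hyw := List.append_inj hyb (by rw [hy.1, hw])
  have hx1 : x = w := hxw.1
  have hy1 : y = w := hyw.1
  subst hx1; subst hy1
  apply hab
  rw [← List.singleton_inj.mp hxw.2, ← List.singleton_inj.mp hyw.2]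

/-- Specials propagate downward: a special of length `n+1` yields one of length `n`. -/
lemma special_tail {w : List A} (hw : IsSpecial w L) (hne : w ≠ []) :
    IsSpecial w.tail L := by
  obtain ⟨a, b, hab, hfa, hfb⟩ := hw
  have key : ∀ c : A, IsFactor (w ++ [c]) L → IsFactor (w.tail ++ [c]) L := by
    intro c hc
    apply isFactor_of_infix L _ hc
    have hsuf : w.tail ++ [c] <:+ w ++ [c] := by
      obtain ⟨s, hs⟩ := w.tail_suffix
      exact ⟨s, by rw [← List.append_assoc, hs]⟩
    exact hsuf.isInfix
  exact ⟨a, b, hab, key a hfa, key b hfb⟩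

lemma stall_succ (hL : Extendable L) (n : ℕ)
    (h : complexity L (n + 1) = complexity L n) :
    complexity L (n + 2) = complexity L (n + 1) := by
  have hns := no_special_of_stall L hL n h
  have hns' : ∀ w : List A, w.length = n + 1 → ¬ IsSpecial w L := by
    intro w hw hsp
    have hne : w ≠ [] := by rintro rfl; simp at hw
    exact hns w.tail (by simp [hw]) (special_tail L hsp hne)
  exact le_antisymm (complexity_le_of_no_special L hL (n + 1) hns')
    (complexity_mono L hL (by omega))

end Aux

theorem stmt_12 {A : Type*} [Fintype A] (L : Set (List A)) (hL : Extendable L) :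
    StrictMono (complexity L) ∨
      ∃ m : ℕ, (∀ i j, i < j → j ≤ m → complexity L i < complexity L j)
        ∧ ∀ n : ℕ, complexity L (m + n) = complexity L m := by
  by_cases hstrict : ∀ n, complexity L n < complexity L (n + 1)
  · exact Or.inl (strictMono_nat_of_lt_succ hstrict)
  · right
    push_neg at hstrict
    have hex : ∃ n, complexity L (n + 1) ≤ complexity L n := hstrict
    set m := Nat.find hex with hm
    have hstall : complexity L (m + 1) = complexity L m :=
      le_antisymm (Nat.find_spec hex) (complexity_mono L hL (by omega))
    have hlt : ∀ k, k < m → complexity L k < complexity L (k + 1) := by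
      intro k hk
      have := Nat.find_min hex hk
      omega
    refine ⟨m, ?_, ?_⟩
    · intro i j hij hjm
      induction j with
      | zero => omega
      | succ k ih =>
        have hk : complexity L k < complexity L (k + 1) := hlt k (by omega)
        rcases Nat.lt_or_ge i k with h | h
        · exact (ih h (by omega)).trans hk
        · have : i = k := by omega
          rw [this]; exact hk
    · have hconst : ∀ n, complexity L (m + n + 1) = complexity L (m + n) := by
        intro n
        induction n with
        | zero => exact hstall
        | succ k ih =>
          have := stall_succ L hL (m + k) ih
          convert this using 2 <;> omega
      intro n
      induction n with
      | zero => rfl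
      | succ k ih => rw [show m + (k + 1) = m + k + 1 from rfl, hconst k, ih]
end

section
/- Let X and Y be languages over a finite alphabet with Y finite and non-empty. The complexity function of the concatenation XY is bounded if and only if the complexity function of X is bounded. -/
lemma infix_append_decomp {A : Type*} {z x y : List A} (h : z <:+: x ++ y) :
    z <:+: x ∨ ∃ s p, z = s ++ p ∧ s <:+ x ∧ p <:+: y := by
  obtain ⟨t, u, h⟩ := h
  by_cases h1 : t.length + z.length ≤ x.length
  · left
    have ht : List.take x.length t = t := List.take_of_length_le (by omega)
    have hz : List.take (x.length - t.length) z = z := List.take_of_length_le (by omega)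
    have hx : x = t ++ (z ++ List.take (x.length - t.length - z.length) u) := by
      have := congrArg (List.take x.length) h
      simpa [List.take_append, ht, hz] using this.symm
    exact ⟨t, List.take (x.length - t.length - z.length) u, by rw [hx]; simp⟩
  · by_cases h2 : x.length ≤ t.length
    · refine Or.inr ⟨[], z, by simp, List.nil_suffix, ⟨t.drop x.length, u, ?_⟩⟩
      have := congrArg (List.drop x.length) h
      have hxz : x.length - t.length = 0 := by omega
      have hxu : x.length - (t ++ z).length = 0 := by simp; omega
      simpa [List.drop_append, hxz, hxu] using this
    · push_neg at h1 h2
      have h4 : x.length - t.length - z.length = 0 := by omega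
      refine Or.inr ⟨z.take (x.length - t.length), z.drop (x.length - t.length),
        (z.take_append_drop _).symm, ⟨t, ?_⟩, ⟨[], u, ?_⟩⟩
      · have := congrArg (List.take x.length) h
        simpa [List.take_append, h4,
          List.take_of_length_le (le_of_lt h2)] using this
      · have := congrArg (List.drop x.length) h
        simpa [List.drop_append, h4,
          List.drop_of_length_le (le_of_lt h2)] using this

lemma fac_finite {A : Type*} [Fintype A] (L : Set (List A)) (n : ℕ) :
    {x : List A | x.length = n ∧ IsFactor x L}.Finite :=
  (List.finite_length_eq A n).subset (fun _ hx => hx.1)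

lemma complexity_eq {A : Type*} [Fintype A] (L : Set (List A)) (n : ℕ) :
    complexity L n = ((fac_finite L n).toFinset).card := by
  have h0 : Nat.card {x : List A // x.length = n ∧ IsFactor x L} =
      Nat.card ↥{x : List A | x.length = n ∧ IsFactor x L} := rfl
  rw [complexity, h0, Nat.card_coe_set_eq, Set.ncard_eq_toFinset_card _ (fac_finite L n)]

theorem stmt_15 {A : Type*} [Fintype A] (X Y : Set (List A))
    (hfin : Y.Finite) (hne : Y.Nonempty) :
    (∃ M : ℕ, ∀ n : ℕ, complexity {z : List A | ∃ x ∈ X, ∃ y ∈ Y, z = x ++ y} n ≤ M) ↔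
      (∃ M : ℕ, ∀ n : ℕ, complexity X n ≤ M) := by
  classical
  set Z : Set (List A) := {z : List A | ∃ x ∈ X, ∃ y ∈ Y, z = x ++ y} with hZ
  constructor
  · rintro ⟨M, hM⟩
    refine ⟨M, fun n => ?_⟩
    refine le_trans ?_ (hM n)
    rw [complexity_eq, complexity_eq]
    apply Finset.card_le_card
    intro z hz
    simp only [Set.Finite.mem_toFinset, Set.mem_setOf_eq] at hz ⊢
    obtain ⟨hlen, w, hw, hinf⟩ := hz
    obtain ⟨y₀, hy₀⟩ := hne
    exact ⟨hlen, w ++ y₀, ⟨w, hw, y₀, hy₀, rfl⟩,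
      hinf.trans (w.prefix_append y₀).isInfix⟩
  · rintro ⟨M, hM⟩
    set P : Finset (List A) := hfin.toFinset.biUnion (fun y => y.sublists.toFinset) with hP
    refine ⟨M + P.card * M, fun n => ?_⟩
    have key : (fac_finite Z n).toFinset ⊆ (fac_finite X n).toFinset ∪
        P.biUnion (fun p => ((fac_finite X (n - p.length)).toFinset).image (· ++ p)) := by
      intro z hz
      simp only [Set.Finite.mem_toFinset, Set.mem_setOf_eq] at hz
      obtain ⟨hlen, w, hw, hinf⟩ := hz
      obtain ⟨x, hx, y, hy, rfl⟩ := hw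
      rcases infix_append_decomp hinf with h | ⟨s, p, rfl, hs, hp⟩
      · apply Finset.mem_union_left
        simp only [Set.Finite.mem_toFinset, Set.mem_setOf_eq]
        exact ⟨hlen, x, hx, h⟩
      · apply Finset.mem_union_right
        rw [Finset.mem_biUnion]
        refine ⟨p, ?_, ?_⟩
        · rw [hP, Finset.mem_biUnion]
          exact ⟨y, hfin.mem_toFinset.2 hy, List.mem_toFinset.2 (List.mem_sublists.2 hp.sublist)⟩
        · rw [Finset.mem_image]
          refine ⟨s, ?_, rfl⟩
          simp only [Set.Finite.mem_toFinset, Set.mem_setOf_eq]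
          have hsl : s.length = n - p.length := by
            simp only [List.length_append] at hlen; omega
          exact ⟨hsl, x, hx, hs.isInfix⟩
    calc complexity Z n = ((fac_finite Z n).toFinset).card := complexity_eq Z n
      _ ≤ _ := Finset.card_le_card key
      _ ≤ ((fac_finite X n).toFinset).card +
            (P.biUnion fun p => ((fac_finite X (n - p.length)).toFinset).image (· ++ p)).card :=
          Finset.card_union_le _ _
      _ ≤ M + P.card * M := by
          gcongr
          · rw [← complexity_eq]; exact hM n
          · calc (P.biUnion fun p => ((fac_finite X (n - p.length)).toFinset).image (· ++ p)).card
                ≤ ∑ p ∈ P, (((fac_finite X (n - p.length)).toFinset).image (· ++ p)).card :=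
                  Finset.card_biUnion_le
              _ ≤ ∑ _p ∈ P, M := Finset.sum_le_sum (fun p _ =>
                  le_trans Finset.card_image_le (by rw [← complexity_eq]; exact hM _))
              _ = P.card * M := by rw [Finset.sum_const, smul_eq_mul]
end

section
/- Let L be a language over a finite alphabet, L_k = { w : wx ∈ L for some word x of length k }, and L' the set of words that are factors of L_k for every k ∈ ℕ. Then L' is extendable: for each w ∈ L' there is a letter a with wa ∈ L'. -/
/-! Since `w` is a factor of `L_{k+1}` (here `truncations L (k + 1)`), the letter following it there
gives a factor `w ++ [f k]` of `L_k`. By pigeonhole some letter `a` equals `f k` for infinitely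
many `k`, and since being a factor of `L_k` is antitone in `k`, `w ++ [a]` is a factor of every
`L_k`. -/

def truncations {A : Type*} (L : Set (List A)) (k : ℕ) : Set (List A) :=
  {v | ∃ x : List A, x.length = k ∧ v ++ x ∈ L}

theorem List.IsInfix.exists_append_singleton {A : Type*} {w v : List A} (h : w <:+: v) (b : A) :
    ∃ a, w ++ [a] <:+: v ++ [b] := by
  obtain ⟨s, t, rfl⟩ := h
  cases t with
  | nil => exact ⟨b, s, [], by simp⟩
  | cons c t => exact ⟨c, s, t ++ [b], by simp⟩

theorem exists_append_singleton_mem_truncations {A : Type*} {L : Set (List A)} {k : ℕ}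
    {v : List A} (hv : v ∈ truncations L (k + 1)) : ∃ b, v ++ [b] ∈ truncations L k := by
  obtain ⟨_ | ⟨b, x⟩, hx, hvx⟩ := hv
  · simp at hx
  · exact ⟨b, x, by simpa using hx, by simpa using hvx⟩

theorem IsFactor.mono {A : Type*} {u : List A} {L M : Set (List A)} (h : IsFactor u L)
    (hLM : ∀ v ∈ L, IsFactor v M) : IsFactor u M := by
  obtain ⟨v, hv, huv⟩ := h
  obtain ⟨w, hw, hvw⟩ := hLM v hv
  exact ⟨w, hw, huv.trans hvw⟩

theorem antitone_isFactor_truncations {A : Type*} (L : Set (List A)) (u : List A) :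
    Antitone fun k => IsFactor u (truncations L k) :=
  antitone_nat_of_succ_le fun _ h => h.mono fun _ hv =>
    let ⟨b, hb⟩ := exists_append_singleton_mem_truncations hv
    ⟨_, hb, (List.prefix_append _ [b]).isInfix⟩

theorem IsFactor.exists_append_singleton_truncations {A : Type*} {L : Set (List A)} {k : ℕ}
    {w : List A} (h : IsFactor w (truncations L (k + 1))) :
    ∃ a, IsFactor (w ++ [a]) (truncations L k) := by
  obtain ⟨v, hv, hwv⟩ := h
  obtain ⟨b, hb⟩ := exists_append_singleton_mem_truncations hv
  obtain ⟨a, ha⟩ := hwv.exists_append_singleton b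
  exact ⟨a, _, hb, ha⟩

theorem stmt_18 {A : Type*} [Fintype A] (L : Set (List A)) :
    Extendable {w : List A |
      ∀ k : ℕ, IsFactor w {v : List A | ∃ x : List A, x.length = k ∧ v ++ x ∈ L}} := by
  intro w hw
  choose f hf using fun k => (hw (k + 1)).exists_append_singleton_truncations (L := L)
  obtain ⟨a, ha⟩ := Finite.exists_infinite_fiber f
  refine ⟨a, fun k => ?_⟩
  obtain ⟨m, hm, hkm⟩ := (Set.infinite_coe_iff.mp ha).exists_gt k
  exact antitone_isFactor_truncations L _ hkm.le (hm ▸ hf m)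
end

section
/- (Ehrenfeucht–Rozenberg gap theorem) Let p be the complexity function of a language over a finite alphabet. Then either p(n) > n for every n ∈ ℕ, or p is bounded from above. -/
namespace ERproof

/-- A word is *live* if it occurs as a factor with arbitrarily large margins on both sides. -/
def Live {A : Type*} (L : Set (List A)) (u : List A) : Prop :=
  ∀ t : ℕ, ∃ α β : List A, t ≤ α.length ∧ t ≤ β.length ∧ IsFactor (α ++ u ++ β) L

/-- There is a live right-special word of length `n`. -/
def RSpec {A : Type*} (L : Set (List A)) (n : ℕ) : Prop :=
  ∃ (u : List A) (a b : A), u.length = n ∧ a ≠ b ∧ Live L (u ++ [a]) ∧ Live L (u ++ [b])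

variable {A : Type*} {L : Set (List A)}

lemma isFactor_of_infix {x y : List A} (hyx : y <:+: x) (hx : IsFactor x L) :
    IsFactor y L := by
  obtain ⟨w, hw, hxw⟩ := hx
  exact ⟨w, hw, hyx.trans hxw⟩

lemma live_of_infix {x y : List A} (hyx : y <:+: x) (hx : Live L x) : Live L y := by
  intro t
  obtain ⟨γ, δ, rfl⟩ := hyx
  obtain ⟨α, β, hα, hβ, hf⟩ := hx t
  refine ⟨α ++ γ, δ ++ β, ?_, ?_, ?_⟩
  · simp only [List.length_append]; omega
  · simp only [List.length_append]; omega
  · have : α ++ γ ++ y ++ (δ ++ β) = α ++ (γ ++ y ++ δ) ++ β := by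
      simp [List.append_assoc]
    rw [this]; exact hf

lemma live_isFactor {u : List A} (h : Live L u) : IsFactor u L := by
  obtain ⟨α, β, _, _, hf⟩ := h 0
  exact isFactor_of_infix ⟨α, β, rfl⟩ hf

lemma finite_len (A : Type*) [Fintype A] (n : ℕ) : Finite {l : List A // l.length = n} :=
  inferInstanceAs (Finite (List.Vector A n))

lemma finite_sub (A : Type*) [Fintype A] (n : ℕ) (P : List A → Prop) :
    Finite {x : List A // x.length = n ∧ P x} := by
  haveI := finite_len A n
  exact Finite.of_injective
    (fun x : {x : List A // x.length = n ∧ P x} => (⟨x.1, x.2.1⟩ : {l : List A // l.length = n}))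
    (by intro a b h; have h2 := congrArg Subtype.val h; exact Subtype.ext h2)

variable [Fintype A]

lemma live_ext {u : List A} (hu : Live L u) : ∃ a : A, Live L (u ++ [a]) := by
  by_contra hno
  push_neg at hno
  have hb : ∀ a : A, ∃ t : ℕ, ∀ α β : List A, t ≤ α.length → t ≤ β.length →
      ¬ IsFactor (α ++ (u ++ [a]) ++ β) L := by
    intro a
    have h := hno a
    unfold Live at h
    push_neg at h
    exact h
  choose tb htb using hb
  obtain ⟨α, β, hα, hβ, hf⟩ := hu (Finset.univ.sup tb + 1)
  have hβne : β ≠ [] := by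
    intro h; rw [h] at hβ; simp at hβ
  obtain ⟨b, β', rfl⟩ := List.exists_cons_of_ne_nil hβne
  have hsb : tb b ≤ Finset.univ.sup tb := Finset.le_sup (Finset.mem_univ b)
  have h1 : tb b ≤ α.length := by omega
  have h2 : tb b ≤ β'.length := by
    simp only [List.length_cons] at hβ; omega
  apply htb b α β' h1 h2
  have : α ++ (u ++ [b]) ++ β' = α ++ u ++ (b :: β') := by
    simp [List.append_assoc]
  rw [this]; exact hf

lemma q_mono (n : ℕ) :
    Nat.card {x : List A // x.length = n ∧ Live L x}
      ≤ Nat.card {x : List A // x.length = n + 1 ∧ Live L x} := by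
  haveI := finite_sub A (n+1) (Live L)
  have hch : ∀ x : {x : List A // x.length = n ∧ Live L x}, ∃ a : A, Live L (x.1 ++ [a]) :=
    fun x => live_ext x.2.2
  choose g hg using hch
  refine Nat.card_le_card_of_injective
    (fun x => ⟨x.1 ++ [g x], by simp [x.2.1], hg x⟩) ?_
  intro x y hxy
  have h : x.1 ++ [g x] = y.1 ++ [g y] := congrArg Subtype.val hxy
  exact Subtype.ext ((List.append_inj' h (by simp)).1)

lemma q_succ_special {n : ℕ} (h : RSpec L n) :
    Nat.card {x : List A // x.length = n ∧ Live L x} + 1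
      ≤ Nat.card {x : List A // x.length = n + 1 ∧ Live L x} := by
  haveI := finite_sub A n (Live L)
  haveI := finite_sub A (n+1) (Live L)
  classical
  obtain ⟨u0, a, b, hlen, hab, ha, hb⟩ := h
  have hu0 : Live L u0 := live_of_infix ((List.prefix_append u0 [a]).isInfix) ha
  have hch : ∀ x : {x : List A // x.length = n ∧ Live L x}, ∃ c : A, Live L (x.1 ++ [c]) :=
    fun x => live_ext x.2.2
  choose g hg using hch
  set u0e : {x : List A // x.length = n ∧ Live L x} := ⟨u0, hlen, hu0⟩ with hu0e
  set x0 : A := if g u0e = a then b else a with hx0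
  have hx0live : Live L (u0 ++ [x0]) := by
    rw [hx0]; split <;> assumption
  have hx0ne : x0 ≠ g u0e := by
    rw [hx0]; split
    · rename_i hh; rw [hh]; exact fun hc => hab hc.symm
    · rename_i hh; exact fun hc => hh hc.symm
  have hcard : Nat.card ({x : List A // x.length = n ∧ Live L x} ⊕ Unit) =
      Nat.card {x : List A // x.length = n ∧ Live L x} + 1 := by
    rw [Nat.card_sum]; simp
  rw [← hcard]
  refine Nat.card_le_card_of_injective
    (fun o => Sum.elim
      (fun x => (⟨x.1 ++ [g x], by simp [x.2.1], hg x⟩ :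
        {x : List A // x.length = n + 1 ∧ Live L x}))
      (fun _ => ⟨u0 ++ [x0], by simp [hlen], hx0live⟩) o) ?_
  rintro (x | _) (y | _) hxy
  · have h : x.1 ++ [g x] = y.1 ++ [g y] := congrArg Subtype.val hxy
    have := (List.append_inj' h (by simp)).1
    exact congrArg Sum.inl (Subtype.ext this)
  · exfalso
    have h : x.1 ++ [g x] = u0 ++ [x0] := congrArg Subtype.val hxy
    obtain ⟨h1, h2⟩ := List.append_inj' h (by simp)
    have hxu : x = u0e := Subtype.ext h1
    apply hx0ne
    rw [← hxu]
    exact (List.singleton_injective h2).symm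
  · exfalso
    have h : u0 ++ [x0] = y.1 ++ [g y] := congrArg Subtype.val hxy
    obtain ⟨h1, h2⟩ := List.append_inj' h (by simp)
    have hyu : y = u0e := Subtype.ext h1.symm
    apply hx0ne
    rw [← hyu]
    exact List.singleton_injective h2
  · rfl

lemma q_le_p (n : ℕ) :
    Nat.card {x : List A // x.length = n ∧ Live L x} ≤ complexity L n := by
  unfold complexity
  haveI := finite_sub A n (fun x => IsFactor x L)
  exact Nat.card_le_card_of_injective
    (fun x => ⟨x.1, x.2.1, live_isFactor x.2.2⟩)
    (by intro a b h; have h2 := congrArg Subtype.val h; exact Subtype.ext h2)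

lemma no_special_above {n1 n : ℕ} (h1 : ¬ RSpec L n1) (hn : n1 ≤ n) : ¬ RSpec L n := by
  rintro ⟨u, a, b, hlen, hab, ha, hb⟩
  apply h1
  refine ⟨u.drop (n - n1), a, b, ?_, hab, ?_, ?_⟩
  · simp [hlen]; omega
  · refine live_of_infix ?_ ha
    obtain ⟨pre, hp⟩ := List.drop_suffix (n - n1) u
    exact ⟨pre, [], by rw [List.append_nil, ← List.append_assoc, hp]⟩
  · refine live_of_infix ?_ hb
    obtain ⟨pre, hp⟩ := List.drop_suffix (n - n1) u
    exact ⟨pre, [], by rw [List.append_nil, ← List.append_assoc, hp]⟩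

lemma uniq_ext {n0 : ℕ} (hns : ¬ RSpec L n0) {v : List A} {a b : A}
    (hv : v.length = n0) (ha : Live L (v ++ [a])) (hb : Live L (v ++ [b])) : a = b := by
  by_contra hab
  exact hns ⟨v, a, b, hv, hab, ha, hb⟩

lemma det {n0 : ℕ} (hns : ¬ RSpec L n0) :
    ∀ (d : ℕ) (x y : List A), x.length = n0 + d → y.length = n0 + d →
      (∀ w, w <:+: x → w.length = n0 + 1 → Live L w) →
      (∀ w, w <:+: y → w.length = n0 + 1 → Live L w) →
      x.take n0 = y.take n0 → x = y := by
  intro d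
  induction d with
  | zero =>
    intro x y hx hy _ _ ht
    have hx' : x.take n0 = x := List.take_of_length_le (by omega)
    have hy' : y.take n0 = y := List.take_of_length_le (by omega)
    rw [← hx', ← hy', ht]
  | succ d ih =>
    intro x y hx hy wcx wcy ht
    have hxne : x ≠ [] := by
      intro h; rw [h] at hx; simp only [List.length_nil] at hx; omega
    have hyne : y ≠ [] := by
      intro h; rw [h] at hy; simp only [List.length_nil] at hy; omega
    set a := x.getLast hxne with hadef
    set b := y.getLast hyne with hbdef
    have hxd : x.dropLast ++ [a] = x := List.dropLast_append_getLast hxne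
    have hyd : y.dropLast ++ [b] = y := List.dropLast_append_getLast hyne
    have hxl : x.dropLast.length = n0 + d := by simp [List.length_dropLast, hx]
    have hyl : y.dropLast.length = n0 + d := by simp [List.length_dropLast, hy]
    have hdroptake : x.dropLast.take n0 = y.dropLast.take n0 := by
      have h1 : x.take n0 = x.dropLast.take n0 := by
        conv_lhs => rw [← hxd]
        rw [List.take_append]
        have h0 : n0 - x.dropLast.length = 0 := by omega
        rw [h0]
        simp
      have h2 : y.take n0 = y.dropLast.take n0 := by
        conv_lhs => rw [← hyd]
        rw [List.take_append]
        have h0 : n0 - y.dropLast.length = 0 := by omega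
        rw [h0]
        simp
      rw [← h1, ← h2, ht]
    have heq : x.dropLast = y.dropLast := by
      apply ih x.dropLast y.dropLast hxl hyl ?_ ?_ hdroptake
      · intro w hw hlw
        exact wcx w (hw.trans ⟨[], [a], by simp [hxd]⟩) hlw
      · intro w hw hlw
        exact wcy w (hw.trans ⟨[], [b], by simp [hyd]⟩) hlw
    set v := x.dropLast.drop d with hvdef
    have hvlen : v.length = n0 := by simp [hvdef, hxl]
    have hva : Live L (v ++ [a]) := by
      apply wcx (v ++ [a]) ?_ (by simp [hvlen])
      refine ⟨x.dropLast.take d, [], ?_⟩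
      rw [List.append_nil, hvdef, ← List.append_assoc, List.take_append_drop, hxd]
    have hvb : Live L (v ++ [b]) := by
      apply wcy (v ++ [b]) ?_ (by simp [hvlen])
      refine ⟨y.dropLast.take d, [], ?_⟩
      have hv' : v = y.dropLast.drop d := by rw [hvdef, heq]
      rw [List.append_nil, hv', ← List.append_assoc, List.take_append_drop, hyd]
    have hab : a = b := uniq_ext hns hvlen hva hvb
    rw [← hxd, ← hyd, heq, hab]

lemma exists_T (n0 : ℕ) :
    ∃ T : ℕ, ∀ w : List A, w.length = n0 + 1 →
      (∃ α β : List A, T + 1 ≤ α.length ∧ T + 1 ≤ β.length ∧ IsFactor (α ++ w ++ β) L) →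
      Live L w := by
  classical
  haveI := finite_len A (n0 + 1)
  haveI : Fintype {l : List A // l.length = n0 + 1} := Fintype.ofFinite _
  have h : ∀ w : {l : List A // l.length = n0 + 1}, ∃ t : ℕ, ¬ Live L w.1 →
      ∀ α β : List A, t ≤ α.length → t ≤ β.length → ¬ IsFactor (α ++ w.1 ++ β) L := by
    intro w
    by_cases hw : Live L w.1
    · exact ⟨0, fun hcon => (hcon hw).elim⟩
    · have h2 := hw
      unfold Live at h2
      push_neg at h2
      obtain ⟨t, ht⟩ := h2
      exact ⟨t, fun _ => ht⟩
  choose f hf using h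
  refine ⟨Finset.univ.sup f, ?_⟩
  rintro w hw ⟨α, β, hα, hβ, hfac⟩
  by_contra hnl
  have hle : f ⟨w, hw⟩ ≤ Finset.univ.sup f := Finset.le_sup (Finset.mem_univ _)
  exact hf ⟨w, hw⟩ hnl α β (by omega) (by omega) hfac

lemma bounded_above {n0 : ℕ} (hns : ¬ RSpec L n0) {T : ℕ}
    (hT : ∀ w : List A, w.length = n0 + 1 →
      (∃ α β : List A, T + 1 ≤ α.length ∧ T + 1 ≤ β.length ∧ IsFactor (α ++ w ++ β) L) →
      Live L w)
    {m : ℕ} (hm : n0 + 2 * (T + 1) ≤ m) :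
    complexity L m ≤ Nat.card ({l : List A // l.length = T + 1} ×
      {l : List A // l.length = n0} × {l : List A // l.length = T + 1}) := by
  classical
  haveI := finite_len A (T + 1)
  haveI := finite_len A n0
  set s := T + 1 with hs
  unfold complexity
  have key : ∀ z : {x : List A // x.length = m ∧ IsFactor x L},
      ((z.1.take (m - s)).drop s).length = n0 + (m - (n0 + 2 * s)) ∧
      (∀ w, w <:+: (z.1.take (m - s)).drop s → w.length = n0 + 1 → Live L w) ∧
      ((z.1.take (m - s)).drop s).take n0 = (z.1.drop s).take n0 ∧
      z.1.take s ++ ((z.1.take (m - s)).drop s ++ z.1.drop (m - s)) = z.1 := by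
    intro z
    obtain ⟨hzlen, hzf⟩ := z.2
    have hxeq : z.1.take s ++ ((z.1.take (m - s)).drop s ++ z.1.drop (m - s)) = z.1 := by
      have hss : z.1.take s = (z.1.take (m - s)).take s := by
        rw [List.take_take]; congr 1; omega
      rw [hss, ← List.append_assoc, List.take_append_drop, List.take_append_drop]
    refine ⟨by simp [hzlen]; omega, ?_, ?_, hxeq⟩
    · intro w hw hlw
      obtain ⟨γ, δ, hγδ⟩ := hw
      apply hT w hlw
      refine ⟨z.1.take s ++ γ, δ ++ z.1.drop (m - s), ?_, ?_, ?_⟩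
      · simp [hzlen]; omega
      · simp [hzlen]; omega
      · have hre : z.1.take s ++ γ ++ w ++ (δ ++ z.1.drop (m - s)) =
            z.1.take s ++ ((γ ++ w ++ δ) ++ z.1.drop (m - s)) := by
          simp [List.append_assoc]
        rw [hre, hγδ, hxeq]
        exact hzf
    · rw [List.drop_take, List.take_take]
      congr 1
      omega
  refine Nat.card_le_card_of_injective (fun x =>
    (⟨x.1.take s, by simp [x.2.1]; omega⟩,
     ⟨(x.1.drop s).take n0, by simp [x.2.1]; omega⟩,
     ⟨x.1.drop (m - s), by simp [x.2.1]; omega⟩)) ?_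
  intro x y hxy
  have h1 : x.1.take s = y.1.take s := congrArg (fun p => p.1.1) hxy
  have h2 : (x.1.drop s).take n0 = (y.1.drop s).take n0 := congrArg (fun p => p.2.1.1) hxy
  have h3 : x.1.drop (m - s) = y.1.drop (m - s) := congrArg (fun p => p.2.2.1) hxy
  obtain ⟨hlx, hwcx, htx, hrx⟩ := key x
  obtain ⟨hly, hwcy, hty, hry⟩ := key y
  have hmid : (x.1.take (m - s)).drop s = (y.1.take (m - s)).drop s :=
    det hns (m - (n0 + 2 * s)) _ _ hlx hly hwcx hwcy (by rw [htx, hty, h2])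
  apply Subtype.ext
  rw [← hrx, ← hry, h1, hmid, h3]

lemma exists_nospec {n0 : ℕ} (hp : complexity L n0 ≤ n0) :
    ∃ n1, n1 ≤ n0 ∧ ¬ RSpec L n1 := by
  by_contra hc
  push_neg at hc
  have hq : ∀ k, k ≤ n0 → k + 1 ≤ Nat.card {x : List A // x.length = k ∧ Live L x} := by
    intro k
    induction k with
    | zero =>
      intro _
      obtain ⟨u, a, b, hu, hab, ha, hb⟩ := hc 0 (Nat.zero_le _)
      have hunil : u = [] := List.eq_nil_of_length_eq_zero hu
      subst hunil
      have hnil : Live L [] := live_of_infix List.nil_infix ha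
      haveI := finite_sub A 0 (Live L)
      haveI : Nonempty {x : List A // x.length = 0 ∧ Live L x} := ⟨⟨[], rfl, hnil⟩⟩
      have := Nat.card_pos (α := {x : List A // x.length = 0 ∧ Live L x})
      omega
    | succ k ih =>
      intro hk
      have h1 := ih (by omega)
      have h2 := q_succ_special (hc k (by omega))
      omega
  have h3 := hq n0 le_rfl
  have h4 := q_le_p (L := L) n0
  omega

end ERproof

/-- Ehrenfeucht–Rozenberg gap theorem. -/
theorem stmt_19 {A : Type*} [Fintype A] (L : Set (List A)) :
    (∀ n : ℕ, n < complexity L n) ∨ ∃ M : ℕ, ∀ n : ℕ, complexity L n ≤ M := by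
  by_cases hall : ∀ n : ℕ, n < complexity L n
  · exact Or.inl hall
  · right
    push_neg at hall
    obtain ⟨n0, hn0⟩ := hall
    obtain ⟨n1, hn1le, hn1⟩ := ERproof.exists_nospec hn0
    have hns0 : ¬ ERproof.RSpec L n0 := ERproof.no_special_above hn1 hn1le
    obtain ⟨T, hT⟩ := ERproof.exists_T (L := L) n0
    refine ⟨max (Nat.card ({l : List A // l.length = T + 1} ×
      {l : List A // l.length = n0} × {l : List A // l.length = T + 1}))
      ((Finset.range (n0 + 2 * (T + 1))).sup (complexity L)), ?_⟩
    intro m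
    by_cases hm : n0 + 2 * (T + 1) ≤ m
    · exact le_trans (ERproof.bounded_above hns0 hT hm) (le_max_left _ _)
    · exact le_trans (Finset.le_sup (Finset.mem_range.mpr (by omega))) (le_max_right _ _)
end
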